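/- arXiv:math/0501468 — 5 statements merged into one kernel-verified Lean document; each statement's English description precedes it below -/
import Mathlib

section
/- Under the particle-mesh Legendre-transform setup, the discrete Hamiltonian Ĥ is differentiable in the particle momenta, and for every particle index β the gradient of Ĥ(X, m̄) with respect to m̄_β equals (1/ΔS) Σ_k ũ_k ψ_k(X_β). Consequently the canonical Hamilton equation Ẋ_β = ΔS ∇_{m̄_β} Ĥ reads Ẋ_β = [ũ]_β, i.e. each particle moves with the grid velocity field interpolated to its position. -/
open scoped RealInnerProductSpace

lemma aux_fderiv_partial {d m : ℕ}
    (f : (Fin m → EuclideanSpace ℝ (Fin d)) → ℝ)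
    (x g : Fin m → EuclideanSpace ℝ (Fin d))
    (hf : DifferentiableAt ℝ f x)
    (hg : ∀ k, HasGradientAt (fun v => f (Function.update x k v)) (g k) (x k))
    (h : Fin m → EuclideanSpace ℝ (Fin d)) :
    fderiv ℝ f x h = ∑ k, ⟪g k, h k⟫ := by
  classical
  have key : ∀ k, (fderiv ℝ f x) (Pi.single k (h k)) = ⟪g k, h k⟫ := by
    intro k
    have h1 := hasFDerivAt_update (𝕜 := ℝ) (i := k) x (x k)
    have h2 : HasFDerivAt f (fderiv ℝ f x) (Function.update x k (x k)) := by
      rw [Function.update_eq_self]; exact hf.hasFDerivAt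
    have hupd : HasFDerivAt (fun v => f (Function.update x k v))
        ((fderiv ℝ f x).comp (ContinuousLinearMap.pi
          (Pi.single k (ContinuousLinearMap.id ℝ (EuclideanSpace ℝ (Fin d)))))) (x k) :=
      h2.comp (x k) h1
    have h4 := hupd.unique (hg k).hasFDerivAt
    have h5 := congrArg (fun (T : _ →L[ℝ] ℝ) => T (h k)) h4
    simp only [ContinuousLinearMap.comp_apply] at h5
    rw [InnerProductSpace.toDual_apply_apply] at h5
    have h6 : (ContinuousLinearMap.pi
        (Pi.single k (ContinuousLinearMap.id ℝ (EuclideanSpace ℝ (Fin d)))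
          : ∀ _ : Fin m, EuclideanSpace ℝ (Fin d) →L[ℝ] EuclideanSpace ℝ (Fin d))) (h k)
        = Pi.single k (h k) := by
      funext j
      by_cases hj : j = k
      · subst hj; simp
      · simp [Pi.single_eq_of_ne hj]
    rw [h6] at h5
    exact h5
  calc fderiv ℝ f x h = fderiv ℝ f x (∑ k, Pi.single k (h k)) := by
        rw [Finset.univ_sum_single]
    _ = ∑ k, fderiv ℝ f x (Pi.single k (h k)) := map_sum _ _ _
    _ = ∑ k, ⟪g k, h k⟫ := Finset.sum_congr rfl fun k _ => key k

/-- **Particle velocity equation from the discrete Hamiltonian.** Under the particle-mesh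
Legendre-transform setup — discrete Lagrangian `L̂(ũ, D̃)`, velocity map `U` satisfying the
Legendre condition `∂L̂/∂ũ_k (U(m̃,D̃), D̃) = ∑ l, M_{kl} m̃_l`, interpolated grid data
`m̃ = M⁻¹ (∑ β (m̄_β/ΔS) ψ_·(X_β))`, `D̃ = M⁻¹ (∑ β (D̄_β/ΔS) ψ_·(X_β))`, `ũ = U(m̃,D̃)`
and discrete Hamiltonian `Ĥ(X, m̄) = ∑ k l M_{kl} ũ_k · m̃_l − L̂(ũ, D̃)` — the Hamiltonian
is differentiable in each particle momentum `m̄_β` with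
`∇_{m̄_β} Ĥ = (1/ΔS) ∑ k, ψ_k(X_β) ũ_k`, so that the canonical Hamilton equation
`Ẋ_β = ΔS ∇_{m̄_β} Ĥ` reads `Ẋ_β = [ũ]_β`. -/
theorem particle_mesh_momentum_gradient
    (d m n : ℕ) (ΔS : ℝ) (hΔS : 0 < ΔS)
    (ψ : Fin m → EuclideanSpace ℝ (Fin d) → ℝ) (hψ : ∀ k, ContDiff ℝ 1 (ψ k))
    (M : Matrix (Fin m) (Fin m) ℝ) (hM : Invertible M)
    (L : (Fin m → EuclideanSpace ℝ (Fin d)) → (Fin m → ℝ) → ℝ)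
    (hL : Differentiable ℝ
      (fun P : (Fin m → EuclideanSpace ℝ (Fin d)) × (Fin m → ℝ) => L P.1 P.2))
    (U : (Fin m → EuclideanSpace ℝ (Fin d)) → (Fin m → ℝ) →
      Fin m → EuclideanSpace ℝ (Fin d))
    (hU : Differentiable ℝ
      (fun P : (Fin m → EuclideanSpace ℝ (Fin d)) × (Fin m → ℝ) => U P.1 P.2))
    -- the Legendre condition: the partial gradient of `L̂` in its `k`-th velocity slot,
    -- evaluated at `(U(m̃,D̃), D̃)`, equals `∑ l, M k l • m̃ l`
    (hLeg : ∀ (mt : Fin m → EuclideanSpace ℝ (Fin d)) (Dt : Fin m → ℝ) (k : Fin m),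
      HasGradientAt (fun v => L (Function.update (U mt Dt) k v) Dt)
        (∑ l, M k l • mt l) (U mt Dt k))
    (Dbar : Fin n → ℝ)
    -- the interpolated grid momentum `m̃` and grid layer-depth `D̃` as functions of the
    -- particle data
    (mt : (Fin n → EuclideanSpace ℝ (Fin d)) → (Fin n → EuclideanSpace ℝ (Fin d)) →
      Fin m → EuclideanSpace ℝ (Fin d))
    (hmt : ∀ X mbar k, mt X mbar k = ∑ l, M⁻¹ k l • ∑ β, (ψ l (X β) / ΔS) • mbar β)
    (Dt : (Fin n → EuclideanSpace ℝ (Fin d)) → Fin m → ℝ)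
    (hDt : ∀ X k, Dt X k = ∑ l, M⁻¹ k l * ∑ β, Dbar β / ΔS * ψ l (X β))
    -- the discrete Hamiltonian obtained by Legendre transform
    (H : (Fin n → EuclideanSpace ℝ (Fin d)) → (Fin n → EuclideanSpace ℝ (Fin d)) → ℝ)
    (hH : ∀ X mbar, H X mbar =
      (∑ k, ∑ l, M k l * ⟪U (mt X mbar) (Dt X) k, mt X mbar l⟫)
        - L (U (mt X mbar) (Dt X)) (Dt X)) :
    ∀ (X mbar : Fin n → EuclideanSpace ℝ (Fin d)) (β : Fin n),
      HasGradientAt (fun v => H X (Function.update mbar β v))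
        ((ΔS)⁻¹ • ∑ k, ψ k (X β) • U (mt X mbar) (Dt X) k) (mbar β) := by
  intro X mbar β
  classical
  haveI := hM
  set w0 : Fin m → EuclideanSpace ℝ (Fin d) := mt X mbar with hw0def
  set u0 : Fin m → EuclideanSpace ℝ (Fin d) := U w0 (Dt X) with hu0def
  set a : Fin m → ℝ := fun k => ∑ l, M⁻¹ k l * (ψ l (X β) / ΔS) with hadef
  set G : EuclideanSpace ℝ (Fin d) → (Fin m → EuclideanSpace ℝ (Fin d)) :=
    fun v => fun k => w0 k + a k • (v - mbar β) with hGdef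
  set F : (Fin m → EuclideanSpace ℝ (Fin d)) → ℝ :=
    fun w => (∑ k, ∑ l, M k l * ⟪U w (Dt X) k, w l⟫) - L (U w (Dt X)) (Dt X) with hFdef
  -- sum over particles with an updated entry
  have hsump : ∀ (c : Fin n → ℝ) (v : EuclideanSpace ℝ (Fin d)),
      ∑ γ, c γ • Function.update mbar β v γ
        = (∑ γ, c γ • mbar γ) + c β • (v - mbar β) := by
    intro c v
    have hterm : ∀ γ, c γ • Function.update mbar β v γ
        = c γ • mbar γ + (if γ = β then c β • (v - mbar β) else 0) := by
      intro γ
      by_cases hγ : γ = β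
      · subst hγ; simp [smul_sub]
      · simp [Function.update_of_ne hγ, hγ]
    rw [Finset.sum_congr rfl fun γ _ => hterm γ, Finset.sum_add_distrib]
    simp
  -- the updated grid momentum is affine in v
  have hmtup : ∀ v, mt X (Function.update mbar β v) = G v := by
    intro v
    funext k
    rw [hmt]
    calc ∑ l, M⁻¹ k l • ∑ γ, (ψ l (X γ) / ΔS) • Function.update mbar β v γ
        = ∑ l, (M⁻¹ k l • ∑ γ, (ψ l (X γ) / ΔS) • mbar γ
            + (M⁻¹ k l * (ψ l (X β) / ΔS)) • (v - mbar β)) := by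
          refine Finset.sum_congr rfl fun l _ => ?_
          rw [hsump, smul_add, smul_smul]
      _ = G v k := by
          rw [Finset.sum_add_distrib, ← Finset.sum_smul]
          have : w0 k = ∑ l, M⁻¹ k l • ∑ γ, (ψ l (X γ) / ΔS) • mbar γ := by
            rw [hw0def, hmt]
          rw [hGdef]
          simp only [hadef]
          rw [← this]
  -- contraction of M with a
  have hMa : ∀ k, ∑ l, M k l * a l = ψ k (X β) / ΔS := by
    intro k
    have hinv : M * M⁻¹ = 1 := Matrix.mul_inv_of_invertible M
    calc ∑ l, M k l * a l
        = ∑ l, ∑ j, M k l * M⁻¹ l j * (ψ j (X β) / ΔS) := by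
          refine Finset.sum_congr rfl fun l _ => ?_
          rw [hadef]
          rw [Finset.mul_sum]
          exact Finset.sum_congr rfl fun j _ => by ring
      _ = ∑ j, (∑ l, M k l * M⁻¹ l j) * (ψ j (X β) / ΔS) := by
          rw [Finset.sum_comm]
          exact Finset.sum_congr rfl fun j _ => by rw [Finset.sum_mul]
      _ = ψ k (X β) / ΔS := by
          have h1 : ∀ j, (∑ l, M k l * M⁻¹ l j) = (1 : Matrix (Fin m) (Fin m) ℝ) k j := by
            intro j; rw [← hinv, Matrix.mul_apply]
          simp only [h1, Matrix.one_apply]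
          simp
  -- differentiability
  have hU1 : Differentiable ℝ (fun w : Fin m → EuclideanSpace ℝ (Fin d) => U w (Dt X)) :=
    hU.comp (differentiable_id.prodMk (differentiable_const _))
  have hL1 : Differentiable ℝ (fun v : Fin m → EuclideanSpace ℝ (Fin d) => L v (Dt X)) :=
    hL.comp (differentiable_id.prodMk (differentiable_const _))
  have hFdiff : Differentiable ℝ F := by
    refine Differentiable.sub ?_ (hL1.comp hU1)
    refine Differentiable.fun_sum fun k _ => ?_
    refine Differentiable.fun_sum fun l _ => ?_
    refine Differentiable.const_mul ?_ _
    exact Differentiable.inner ℝ (differentiable_pi.mp hU1 k) (differentiable_pi.mp differentiable_id l)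
  have hGdiff : Differentiable ℝ G := by
    refine differentiable_pi.mpr fun k => ?_
    exact ((differentiable_id.sub_const (mbar β)).const_smul (a k)).const_add (w0 k)
  have hφd : Differentiable ℝ (fun v => F (G v)) := hFdiff.comp hGdiff
  -- the derivatives used below
  set dU : (Fin m → EuclideanSpace ℝ (Fin d)) →L[ℝ] (Fin m → EuclideanSpace ℝ (Fin d)) :=
    fderiv ℝ (fun w => U w (Dt X)) w0 with hdUdef
  set dL1 : (Fin m → EuclideanSpace ℝ (Fin d)) →L[ℝ] ℝ :=
    fderiv ℝ (fun v => L v (Dt X)) u0 with hdL1def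
  -- the key directional derivative computation
  have hkey : ∀ h : EuclideanSpace ℝ (Fin d),
      fderiv ℝ (fun v => F (G v)) (mbar β) h
        = ⟪(ΔS)⁻¹ • ∑ k, ψ k (X β) • u0 k, h⟫ := by
    intro h
    set Ah : Fin m → EuclideanSpace ℝ (Fin d) := fun k => a k • h with hAhdef
    set u' : Fin m → EuclideanSpace ℝ (Fin d) := dU Ah with hu'def
    set c : ℝ → (Fin m → EuclideanSpace ℝ (Fin d)) := fun t => w0 + t • Ah with hcdef
    have hc0 : c 0 = w0 := by simp [hcdef]
    have hc : HasDerivAt c Ah 0 := by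
      have h1 := ((hasDerivAt_id (0 : ℝ)).smul_const Ah).const_add w0
      simpa [hcdef] using h1
    have hck : ∀ l, HasDerivAt (fun t => c t l) (Ah l) 0 := fun l =>
      ((ContinuousLinearMap.proj (R := ℝ)
        (φ := fun _ : Fin m => EuclideanSpace ℝ (Fin d)) l).hasFDerivAt.comp_hasDerivAt 0 hc :)
    have hUc : HasDerivAt (fun t => U (c t) (Dt X)) u' 0 := by
      have h1 : HasFDerivAt (fun w => U w (Dt X)) dU (c 0) := by
        rw [hc0]; exact (hU1 w0).hasFDerivAt
      exact h1.comp_hasDerivAt 0 hc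
    have hUck : ∀ k, HasDerivAt (fun t => U (c t) (Dt X) k) (u' k) 0 := fun k =>
      ((ContinuousLinearMap.proj (R := ℝ)
        (φ := fun _ : Fin m => EuclideanSpace ℝ (Fin d)) k).hasFDerivAt.comp_hasDerivAt 0 hUc :)
    have hterm : ∀ k l, HasDerivAt (fun t => M k l * ⟪U (c t) (Dt X) k, c t l⟫)
        (M k l * (⟪u0 k, Ah l⟫ + ⟪u' k, w0 l⟫)) 0 := by
      intro k l
      have h1 := HasDerivAt.const_mul (M k l) (HasDerivAt.inner ℝ (hUck k) (hck l))
      simpa [hc0, ← hu0def] using h1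
    have hsum1 : HasDerivAt (fun t => ∑ k, ∑ l, M k l * ⟪U (c t) (Dt X) k, c t l⟫)
        (∑ k, ∑ l, M k l * (⟪u0 k, Ah l⟫ + ⟪u' k, w0 l⟫)) 0 := by
      refine HasDerivAt.fun_sum fun k _ => ?_
      exact HasDerivAt.fun_sum fun l _ => hterm k l
    have hLc : HasDerivAt (fun t => L (U (c t) (Dt X)) (Dt X)) (dL1 u') 0 := by
      have h1 : HasFDerivAt (fun v => L v (Dt X)) dL1 (U (c 0) (Dt X)) := by
        rw [hc0]; exact (hL1 u0).hasFDerivAt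
      exact h1.comp_hasDerivAt 0 hUc
    have hFc : HasDerivAt (fun t => F (c t))
        ((∑ k, ∑ l, M k l * (⟪u0 k, Ah l⟫ + ⟪u' k, w0 l⟫)) - dL1 u') 0 :=
      hsum1.sub hLc
    -- chain-rule side
    have hγ : HasDerivAt (fun t : ℝ => mbar β + t • h) h 0 := by
      simpa using ((hasDerivAt_id (0 : ℝ)).smul_const h).const_add (mbar β)
    have hpt : mbar β + (0 : ℝ) • h = mbar β := by simp
    have hder : HasDerivAt (fun t : ℝ => F (G (mbar β + t • h)))
        (fderiv ℝ (fun v => F (G v)) (mbar β) h) 0 := by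
      have h2 : HasFDerivAt (fun v => F (G v))
          (fderiv ℝ (fun v => F (G v)) (mbar β)) (mbar β + (0 : ℝ) • h) := by
        rw [hpt]; exact (hφd (mbar β)).hasFDerivAt
      exact h2.comp_hasDerivAt 0 hγ
    have hfun : (fun t : ℝ => F (G (mbar β + t • h))) = fun t => F (c t) := by
      funext t
      congr 1
      funext k
      show w0 k + a k • (mbar β + t • h - mbar β) = w0 k + t • Ah k
      rw [add_sub_cancel_left, smul_comm]
    have huniq : fderiv ℝ (fun v => F (G v)) (mbar β) h
        = (∑ k, ∑ l, M k l * (⟪u0 k, Ah l⟫ + ⟪u' k, w0 l⟫)) - dL1 u' := by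
      refine hder.unique ?_
      rw [hfun]
      exact hFc
    -- compute the value of dL1 via the Legendre condition
    have hdL1 : dL1 u' = ∑ k, ∑ l, M k l * ⟪w0 l, u' k⟫ := by
      have h1 := aux_fderiv_partial (fun v => L v (Dt X)) u0 (fun k => ∑ l, M k l • w0 l)
        (hL1 u0) (fun k => hLeg w0 (Dt X) k) u'
      rw [hdL1def, h1]
      refine Finset.sum_congr rfl fun k _ => ?_
      rw [sum_inner]
      exact Finset.sum_congr rfl fun l _ => real_inner_smul_left _ _ _
    rw [huniq, hdL1]
    -- algebra
    have hcancel : (∑ k, ∑ l, M k l * (⟪u0 k, Ah l⟫ + ⟪u' k, w0 l⟫))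
        - ∑ k, ∑ l, M k l * ⟪w0 l, u' k⟫
        = ∑ k, ∑ l, M k l * ⟪u0 k, Ah l⟫ := by
      have h1 : ∀ k l, M k l * (⟪u0 k, Ah l⟫ + ⟪u' k, w0 l⟫)
          = M k l * ⟪u0 k, Ah l⟫ + M k l * ⟪w0 l, u' k⟫ := by
        intro k l
        rw [real_inner_comm (u' k) (w0 l)]
        ring
      simp only [h1, Finset.sum_add_distrib]
      ring
    rw [hcancel]
    calc ∑ k, ∑ l, M k l * ⟪u0 k, Ah l⟫
        = ∑ k, (ψ k (X β) / ΔS) * ⟪u0 k, h⟫ := by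
          refine Finset.sum_congr rfl fun k _ => ?_
          rw [← hMa k, Finset.sum_mul]
          refine Finset.sum_congr rfl fun l _ => ?_
          have : Ah l = a l • h := rfl
          rw [this, real_inner_smul_right]
          ring
      _ = ⟪(ΔS)⁻¹ • ∑ k, ψ k (X β) • u0 k, h⟫ := by
          rw [real_inner_smul_left, sum_inner]
          rw [Finset.mul_sum]
          refine Finset.sum_congr rfl fun k _ => ?_
          rw [real_inner_smul_left]
          ring
  -- assemble
  have hEq : (fun v => H X (Function.update mbar β v)) = fun v => F (G v) := by
    funext v
    rw [hH, hmtup v]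
  rw [hEq]
  have hfinal : fderiv ℝ (fun v => F (G v)) (mbar β)
      = InnerProductSpace.toDual ℝ _ ((ΔS)⁻¹ • ∑ k, ψ k (X β) • u0 k) :=
    ContinuousLinearMap.ext fun h => by
      rw [hkey h, InnerProductSpace.toDual_apply_apply]
  exact hasGradientAt_iff_hasFDerivAt.mpr (hfinal ▸ (hφd (mbar β)).hasFDerivAt)
end

section
/- Under the particle-mesh Legendre-transform setup, the discrete Hamiltonian Ĥ is differentiable in the particle positions, and for every particle index β the gradient of Ĥ(X, m̄) with respect to X_β equals (1/ΔS) Σ_k (ũ_k · m̄_β) ∇ψ_k(X_β) − (D̄_β/ΔS) Σ_{k,l} (∂L̂/∂D̃_k)(ũ, D̃) (M⁻¹)_{kl} ∇ψ_l(X_β). Consequently the canonical Hamilton equation (d/dt) m̄_β / ΔS = −∇_{X_β} Ĥ reads (d/dt) m̄_β = −[(∇ũ)ᵀ]_β · m̄_β + D̄_β [∇(M⁻¹ ∂L̂/∂D̃)]_β, where [(∇ũ)ᵀ]_β · m̄_β denotes the vector in ℝ^d whose i-th component is Σ_k (ũ_k · m̄_β) ∂_i ψ_k(X_β). -/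
open scoped RealInnerProductSpace

set_option maxHeartbeats 400000 in
/-- **Particle momentum equation from the discrete Hamiltonian.** Under the particle-mesh
Legendre-transform setup — discrete Lagrangian `L̂(ũ, D̃)`, velocity map `U` satisfying the
Legendre condition `∂L̂/∂ũ_k (U(m̃,D̃), D̃) = ∑ l, M_{kl} m̃_l`, interpolated grid data
`m̃ = M⁻¹ (∑ β (m̄_β/ΔS) ψ_·(X_β))`, `D̃ = M⁻¹ (∑ β (D̄_β/ΔS) ψ_·(X_β))`, `ũ = U(m̃,D̃)`
and discrete Hamiltonian `Ĥ(X, m̄) = ∑ k l M_{kl} ũ_k · m̃_l − L̂(ũ, D̃)` — the Hamiltonian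
is differentiable in each particle position `X_β` with
`∇_{X_β} Ĥ = (1/ΔS) ∑ k (ũ_k · m̄_β) ∇ψ_k(X_β)
  − (D̄_β/ΔS) ∑ k l (∂L̂/∂D̃_k)(ũ, D̃) (M⁻¹)_{kl} ∇ψ_l(X_β)`,
so the canonical Hamilton equation `(d/dt) m̄_β / ΔS = −∇_{X_β} Ĥ` reads
`(d/dt) m̄_β = −[(∇ũ)ᵀ]_β · m̄_β + D̄_β [∇(M⁻¹ ∂L̂/∂D̃)]_β`. -/
theorem particle_mesh_position_gradient
    (d m n : ℕ) (ΔS : ℝ) (hΔS : 0 < ΔS)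
    (ψ : Fin m → EuclideanSpace ℝ (Fin d) → ℝ) (hψ : ∀ k, ContDiff ℝ 1 (ψ k))
    (M : Matrix (Fin m) (Fin m) ℝ) (hM : Invertible M)
    (L : (Fin m → EuclideanSpace ℝ (Fin d)) → (Fin m → ℝ) → ℝ)
    (hL : Differentiable ℝ
      (fun P : (Fin m → EuclideanSpace ℝ (Fin d)) × (Fin m → ℝ) => L P.1 P.2))
    (U : (Fin m → EuclideanSpace ℝ (Fin d)) → (Fin m → ℝ) →
      Fin m → EuclideanSpace ℝ (Fin d))
    (hU : Differentiable ℝ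
      (fun P : (Fin m → EuclideanSpace ℝ (Fin d)) × (Fin m → ℝ) => U P.1 P.2))
    -- the Legendre condition: the partial gradient of `L̂` in its `k`-th velocity slot,
    -- evaluated at `(U(m̃,D̃), D̃)`, equals `∑ l, M k l • m̃ l`
    (hLeg : ∀ (mt : Fin m → EuclideanSpace ℝ (Fin d)) (Dt : Fin m → ℝ) (k : Fin m),
      HasGradientAt (fun v => L (Function.update (U mt Dt) k v) Dt)
        (∑ l, M k l • mt l) (U mt Dt k))
    (Dbar : Fin n → ℝ)
    -- the interpolated grid momentum `m̃` and grid layer-depth `D̃` as functions of the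
    -- particle data
    (mt : (Fin n → EuclideanSpace ℝ (Fin d)) → (Fin n → EuclideanSpace ℝ (Fin d)) →
      Fin m → EuclideanSpace ℝ (Fin d))
    (hmt : ∀ X mbar k, mt X mbar k = ∑ l, M⁻¹ k l • ∑ β, (ψ l (X β) / ΔS) • mbar β)
    (Dt : (Fin n → EuclideanSpace ℝ (Fin d)) → Fin m → ℝ)
    (hDt : ∀ X k, Dt X k = ∑ l, M⁻¹ k l * ∑ β, Dbar β / ΔS * ψ l (X β))
    -- the discrete Hamiltonian obtained by Legendre transform
    (H : (Fin n → EuclideanSpace ℝ (Fin d)) → (Fin n → EuclideanSpace ℝ (Fin d)) → ℝ)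
    (hH : ∀ X mbar, H X mbar =
      (∑ k, ∑ l, M k l * ⟪U (mt X mbar) (Dt X) k, mt X mbar l⟫)
        - L (U (mt X mbar) (Dt X)) (Dt X)) :
    ∀ (X mbar : Fin n → EuclideanSpace ℝ (Fin d)) (β : Fin n),
      HasGradientAt (fun y => H (Function.update X β y) mbar)
        ((ΔS)⁻¹ • ∑ k, ⟪U (mt X mbar) (Dt X) k, mbar β⟫ • gradient (ψ k) (X β)
          - (Dbar β / ΔS) • ∑ k, ∑ l,
              (fderiv ℝ (fun D' : Fin m → ℝ => L (U (mt X mbar) (Dt X)) D') (Dt X)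
                  (Pi.single k 1) * M⁻¹ k l) • gradient (ψ l) (X β))
        (X β) := by

  intro X mbar β
  classical
  set m0 : Fin m → EuclideanSpace ℝ (Fin d) := mt X mbar with hm0
  set D0 : Fin m → ℝ := Dt X with hD0
  set u0 : Fin m → EuclideanSpace ℝ (Fin d) := U m0 D0 with hu0
  set Dψ : Fin m → (EuclideanSpace ℝ (Fin d) →L[ℝ] ℝ) := fun j => fderiv ℝ (ψ j) (X β) with hDψ
  have hψd : ∀ j, HasFDerivAt (ψ j) (Dψ j) (X β) := fun j =>
    (((hψ j).differentiable one_ne_zero) (X β)).hasFDerivAt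
  -- derivatives of the γ-sums
  have hsum1 : ∀ l, HasFDerivAt
      (fun y => ∑ γ, (ψ l (Function.update X β y γ) / ΔS) • mbar γ)
      ((ΔS⁻¹ • Dψ l).smulRight (mbar β)) (X β) := by
    intro l
    have h : ∀ γ ∈ Finset.univ, HasFDerivAt
        (fun y => (ψ l (Function.update X β y γ) / ΔS) • mbar γ)
        (if γ = β then (ΔS⁻¹ • Dψ l).smulRight (mbar β) else 0) (X β) := by
      intro γ _
      by_cases hγ : γ = β
      · have hd : HasFDerivAt (fun y => ψ l y / ΔS) (ΔS⁻¹ • Dψ l) (X β) := by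
          simpa [div_eq_inv_mul] using (hψd l).const_mul ΔS⁻¹
        rw [show (fun y => (ψ l (Function.update X β y γ) / ΔS) • mbar γ)
            = fun y => (ψ l y / ΔS) • mbar γ from
          funext fun y => by rw [hγ, Function.update_self], if_pos hγ, hγ]
        exact hd.smul_const (mbar β)
      · simp only [Function.update_of_ne hγ, if_neg hγ]
        exact hasFDerivAt_const _ _
    simpa using HasFDerivAt.fun_sum h
  have hsum2 : ∀ l, HasFDerivAt
      (fun y => ∑ γ, Dbar γ / ΔS * ψ l (Function.update X β y γ))
      ((Dbar β / ΔS) • Dψ l) (X β) := by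
    intro l
    have h : ∀ γ ∈ Finset.univ, HasFDerivAt
        (fun y => Dbar γ / ΔS * ψ l (Function.update X β y γ))
        (if γ = β then (Dbar β / ΔS) • Dψ l else 0) (X β) := by
      intro γ _
      by_cases hγ : γ = β
      · rw [show (fun y => Dbar γ / ΔS * ψ l (Function.update X β y γ))
            = fun y => Dbar γ / ΔS * ψ l y from
          funext fun y => by rw [hγ, Function.update_self], if_pos hγ, hγ]
        exact (hψd l).const_mul (Dbar β / ΔS)
      · simp only [Function.update_of_ne hγ, if_neg hγ]
        exact hasFDerivAt_const _ _
    simpa using HasFDerivAt.fun_sum h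
  set A1 : EuclideanSpace ℝ (Fin d) →L[ℝ] (Fin m → EuclideanSpace ℝ (Fin d)) :=
    ContinuousLinearMap.pi
      (fun k => ∑ l, M⁻¹ k l • ((ΔS⁻¹ • Dψ l).smulRight (mbar β))) with hA1
  set A2 : EuclideanSpace ℝ (Fin d) →L[ℝ] (Fin m → ℝ) :=
    ContinuousLinearMap.pi
      (fun k => ∑ l, M⁻¹ k l • ((Dbar β / ΔS) • Dψ l)) with hA2
  have hΦ1 : HasFDerivAt (fun y => mt (Function.update X β y) mbar) A1 (X β) := by
    rw [show (fun y => mt (Function.update X β y) mbar)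
        = fun y k => ∑ l, M⁻¹ k l • ∑ γ, (ψ l (Function.update X β y γ) / ΔS) • mbar γ
      from funext fun y => funext fun k => hmt _ _ k, hA1]
    exact hasFDerivAt_pi.2 fun k => HasFDerivAt.fun_sum fun l _ => (hsum1 l).const_smul (M⁻¹ k l)
  have hΦ2 : HasFDerivAt (fun y => Dt (Function.update X β y)) A2 (X β) := by
    rw [show (fun y => Dt (Function.update X β y))
        = fun y k => ∑ l, M⁻¹ k l * ∑ γ, Dbar γ / ΔS * ψ l (Function.update X β y γ)
      from funext fun y => funext fun k => hDt _ k, hA2]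
    exact hasFDerivAt_pi.2 fun k => HasFDerivAt.fun_sum fun l _ => (hsum2 l).const_mul (M⁻¹ k l)
  set DU := fderiv ℝ
    (fun P : (Fin m → EuclideanSpace ℝ (Fin d)) × (Fin m → ℝ) => U P.1 P.2) (m0, D0) with hDUdef
  set DL := fderiv ℝ
    (fun P : (Fin m → EuclideanSpace ℝ (Fin d)) × (Fin m → ℝ) => L P.1 P.2) (u0, D0) with hDLdef
  have hDU : HasFDerivAt
      (fun P : (Fin m → EuclideanSpace ℝ (Fin d)) × (Fin m → ℝ) => U P.1 P.2)
      DU (m0, D0) := (hU (m0, D0)).hasFDerivAt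
  have hDL : HasFDerivAt
      (fun P : (Fin m → EuclideanSpace ℝ (Fin d)) × (Fin m → ℝ) => L P.1 P.2)
      DL (u0, D0) := (hL (u0, D0)).hasFDerivAt
  have hUk : ∀ k, HasFDerivAt
      (fun P : (Fin m → EuclideanSpace ℝ (Fin d)) × (Fin m → ℝ) => U P.1 P.2 k)
      ((ContinuousLinearMap.proj k).comp DU) (m0, D0) := fun k => hasFDerivAt_pi'.1 hDU k
  have hP1 : ∀ l : Fin m, HasFDerivAt
      (fun P : (Fin m → EuclideanSpace ℝ (Fin d)) × (Fin m → ℝ) => P.1 l)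
      ((ContinuousLinearMap.proj l).comp (ContinuousLinearMap.fst ℝ _ _)) (m0, D0) :=
    fun l => hasFDerivAt_pi'.1 (hasFDerivAt_fst (p := (m0, D0))) l
  have hinner : ∀ k l, HasFDerivAt
      (fun P : (Fin m → EuclideanSpace ℝ (Fin d)) × (Fin m → ℝ) => ⟪U P.1 P.2 k, P.1 l⟫)
      ((fderivInnerCLM ℝ (u0 k, m0 l)).comp
        (((ContinuousLinearMap.proj k).comp DU).prod
          ((ContinuousLinearMap.proj l).comp (ContinuousLinearMap.fst ℝ _ _)))) (m0, D0) :=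
    fun k l => by
      have h := HasFDerivAt.inner ℝ (hUk k) (hP1 l)
      exact h
  have hbil : HasFDerivAt
      (fun P : (Fin m → EuclideanSpace ℝ (Fin d)) × (Fin m → ℝ) =>
        ∑ k, ∑ l, M k l * ⟪U P.1 P.2 k, P.1 l⟫)
      (∑ k, ∑ l, M k l • ((fderivInnerCLM ℝ (u0 k, m0 l)).comp
        (((ContinuousLinearMap.proj k).comp DU).prod
          ((ContinuousLinearMap.proj l).comp (ContinuousLinearMap.fst ℝ _ _))))) (m0, D0) :=
    by
      have h := HasFDerivAt.fun_sum (u := Finset.univ) fun k _ =>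
        HasFDerivAt.fun_sum (u := Finset.univ) fun l _ => (hinner k l).const_mul (M k l)
      exact h
  have hLcomp : HasFDerivAt
      (fun P : (Fin m → EuclideanSpace ℝ (Fin d)) × (Fin m → ℝ) => L (U P.1 P.2) P.2)
      (DL.comp (DU.prod (ContinuousLinearMap.snd ℝ _ _))) (m0, D0) :=
    by
      have h := HasFDerivAt.comp (m0, D0) hDL (HasFDerivAt.prodMk hDU hasFDerivAt_snd)
      exact h
  have hF := hbil.sub hLcomp
  have hfun : (fun y => H (Function.update X β y) mbar) =
      (fun P : (Fin m → EuclideanSpace ℝ (Fin d)) × (Fin m → ℝ) =>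
        (∑ k, ∑ l, M k l * ⟪U P.1 P.2 k, P.1 l⟫) - L (U P.1 P.2) P.2)
      ∘ (fun y => (mt (Function.update X β y) mbar, Dt (Function.update X β y))) :=
    funext fun y => hH _ _
  have hf : HasFDerivAt (fun y => H (Function.update X β y) mbar)
      (((∑ k, ∑ l, M k l • ((fderivInnerCLM ℝ (u0 k, m0 l)).comp
        (((ContinuousLinearMap.proj k).comp DU).prod
          ((ContinuousLinearMap.proj l).comp (ContinuousLinearMap.fst ℝ _ _)))))
        - DL.comp (DU.prod (ContinuousLinearMap.snd ℝ _ _))).comp (A1.prod A2)) (X β) := by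
    rw [hfun]
    refine HasFDerivAt.comp (X β) ?_ (HasFDerivAt.prodMk hΦ1 hΦ2)
    simp only [Function.update_eq_self]
    exact hF
  -- the Legendre identity for the velocity-slot partial of DL
  have hsingle : ∀ (k : Fin m) (v : EuclideanSpace ℝ (Fin d)),
      DL (Pi.single k v, 0) = ⟪∑ l, M k l • m0 l, v⟫ := by
    intro k
    set Jk : EuclideanSpace ℝ (Fin d) →L[ℝ] (Fin m → EuclideanSpace ℝ (Fin d)) :=
      ContinuousLinearMap.pi
        (Pi.single k (ContinuousLinearMap.id ℝ (EuclideanSpace ℝ (Fin d)))) with hJk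
    have hupd : HasFDerivAt (fun v : EuclideanSpace ℝ (Fin d) => Function.update u0 k v)
        Jk (u0 k) := by
      rw [hJk]
      apply hasFDerivAt_pi.2
      intro j
      by_cases hj : j = k
      · subst hj
        simp only [Function.update_self, Pi.single_eq_same]
        exact hasFDerivAt_id _
      · simp only [Function.update_of_ne hj, Pi.single_eq_of_ne hj]
        exact hasFDerivAt_const _ _
    have hcomp : HasFDerivAt (fun v => L (Function.update u0 k v) D0)
        (DL.comp (Jk.prod
          (0 : EuclideanSpace ℝ (Fin d) →L[ℝ] (Fin m → ℝ)))) (u0 k) := by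
      have hDL2 : HasFDerivAt
          (fun P : (Fin m → EuclideanSpace ℝ (Fin d)) × (Fin m → ℝ) => L P.1 P.2)
          DL (Function.update u0 k (u0 k), D0) := by
        rw [Function.update_eq_self]
        exact hDL
      have h := hDL2.comp (u0 k) (HasFDerivAt.prodMk hupd (hasFDerivAt_const D0 (u0 k)))
      exact h
    have hgradk := (hLeg m0 D0 k).hasFDerivAt
    have huniq := hgradk.unique hcomp
    intro v
    have hv := congrArg (fun T : EuclideanSpace ℝ (Fin d) →L[ℝ] ℝ => T v) huniq
    simp only [InnerProductSpace.toDual_apply_apply, ContinuousLinearMap.comp_apply,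
      ContinuousLinearMap.prod_apply, ContinuousLinearMap.zero_apply] at hv
    have hpi : Jk v = Pi.single k v := by
      rw [hJk]
      funext j
      by_cases hj : j = k
      · subst hj; simp
      · simp [Pi.single_eq_of_ne hj]
    rw [hpi] at hv
    exact hv.symm
  have fact1 : ∀ v : Fin m → EuclideanSpace ℝ (Fin d),
      DL (v, 0) = ∑ k, ∑ l, M k l * ⟪v k, m0 l⟫ := by
    intro v
    have hv : ((v, 0) : (Fin m → EuclideanSpace ℝ (Fin d)) × (Fin m → ℝ))
        = ∑ k, ((Pi.single k (v k), 0) :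
            (Fin m → EuclideanSpace ℝ (Fin d)) × (Fin m → ℝ)) := by
      apply Prod.ext
      · rw [Prod.fst_sum]
        simp [Finset.univ_sum_single]
      · rw [Prod.snd_sum]
        simp
    rw [hv, map_sum]
    refine Finset.sum_congr rfl fun k _ => ?_
    rw [hsingle k (v k), sum_inner]
    refine Finset.sum_congr rfl fun l _ => ?_
    rw [real_inner_smul_left, real_inner_comm]
  have hpartial : ∀ k : Fin m,
      fderiv ℝ (fun D' : Fin m → ℝ => L u0 D') D0 (Pi.single k 1)
        = DL (0, Pi.single k 1) := by
    have h : HasFDerivAt (fun D' : Fin m → ℝ => L u0 D')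
        (DL.comp ((0 : (Fin m → ℝ) →L[ℝ] (Fin m → EuclideanSpace ℝ (Fin d))).prod
          (ContinuousLinearMap.id ℝ (Fin m → ℝ)))) D0 := by
      have h2 := hDL.comp D0 (HasFDerivAt.prodMk (hasFDerivAt_const u0 D0) (hasFDerivAt_id D0))
      exact h2
    intro k
    rw [h.fderiv]
    simp
  have fact2 : ∀ w : Fin m → ℝ, DL (0, w) = ∑ k, w k * DL (0, Pi.single k 1) := by
    intro w
    have hw : ((0, w) : (Fin m → EuclideanSpace ℝ (Fin d)) × (Fin m → ℝ))
        = ∑ k, w k • ((0, Pi.single k 1) :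
            (Fin m → EuclideanSpace ℝ (Fin d)) × (Fin m → ℝ)) := by
      apply Prod.ext
      · rw [Prod.fst_sum]
        simp
      · rw [Prod.snd_sum]
        funext j
        rw [Finset.sum_apply]
        simp [Pi.single_apply, Finset.sum_ite_eq]
    rw [hw, map_sum]
    refine Finset.sum_congr rfl fun k _ => ?_
    rw [map_smul, smul_eq_mul]
  rw [hasGradientAt_iff_hasFDerivAt]
  refine hf.congr_fderiv ?_
  refine ContinuousLinearMap.ext fun dv => ?_
  have hgradpsi : ∀ j, ⟪gradient (ψ j) (X β), dv⟫ = Dψ j dv := fun j => by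
    have h1 := (((hψ j).differentiable one_ne_zero (X β)).hasGradientAt).hasFDerivAt.unique (hψd j)
    have h2 := congrArg (fun T : EuclideanSpace ℝ (Fin d) →L[ℝ] ℝ => T dv) h1
    simpa [InnerProductSpace.toDual_apply_apply] using h2
  have hA1v : ∀ l, A1 dv l = ∑ j, M⁻¹ l j • ((ΔS⁻¹ * Dψ j dv) • mbar β) := by
    intro l
    rw [hA1]
    simp [ContinuousLinearMap.pi_apply, ContinuousLinearMap.sum_apply,
      ContinuousLinearMap.smul_apply, ContinuousLinearMap.smulRight_apply, smul_eq_mul]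
  have hA2v : ∀ k, A2 dv k = ∑ l, M⁻¹ k l * ((Dbar β / ΔS) * Dψ l dv) := by
    intro k
    rw [hA2]
    simp [ContinuousLinearMap.pi_apply, ContinuousLinearMap.sum_apply,
      ContinuousLinearMap.smul_apply, smul_eq_mul]
  simp only [ContinuousLinearMap.comp_apply, ContinuousLinearMap.sub_apply,
    ContinuousLinearMap.sum_apply, ContinuousLinearMap.smul_apply,
    ContinuousLinearMap.prod_apply, fderivInnerCLM_apply, ContinuousLinearMap.proj_apply,
    ContinuousLinearMap.coe_fst', ContinuousLinearMap.coe_snd',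
    InnerProductSpace.toDual_apply_apply, smul_eq_mul]
  have hMM : ∀ k j : Fin m, (∑ l, M k l * M⁻¹ l j) = if k = j then 1 else 0 := by
    intro k j
    have h := Matrix.mul_inv_of_invertible M
    calc (∑ l, M k l * M⁻¹ l j) = (M * M⁻¹) k j := (Matrix.mul_apply).symm
      _ = (1 : Matrix (Fin m) (Fin m) ℝ) k j := by rw [h]
      _ = if k = j then 1 else 0 := Matrix.one_apply
  have hsplit : DL (DU (A1 dv, A2 dv), A2 dv)
      = DL (DU (A1 dv, A2 dv), 0) + DL (0, A2 dv) := by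
    rw [← map_add]
    congr 1
    rw [Prod.mk_add_mk, add_zero, zero_add]
  have e1 : (∑ k, ∑ l, M k l * ⟪u0 k, A1 dv l⟫)
      = ΔS⁻¹ * ∑ k, ⟪u0 k, mbar β⟫ * Dψ k dv := by
    simp only [hA1v, inner_sum, real_inner_smul_right]
    rw [Finset.mul_sum]
    refine Finset.sum_congr rfl fun k _ => ?_
    calc ∑ l, M k l * ∑ j, M⁻¹ l j * (ΔS⁻¹ * Dψ j dv * ⟪u0 k, mbar β⟫)
        = ∑ j, (∑ l, M k l * M⁻¹ l j) * (ΔS⁻¹ * Dψ j dv * ⟪u0 k, mbar β⟫) := by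
          simp only [Finset.mul_sum, Finset.sum_mul]
          rw [Finset.sum_comm]
          exact Finset.sum_congr rfl fun j _ => Finset.sum_congr rfl fun l _ => by ring
      _ = ΔS⁻¹ * (⟪u0 k, mbar β⟫ * Dψ k dv) := by
          simp only [hMM, ite_mul, one_mul, zero_mul, Finset.sum_ite_eq,
            Finset.mem_univ, if_true]
          ring
  have e2 : DL (0, A2 dv) = (Dbar β / ΔS) * ∑ k, ∑ l,
      ((fderiv ℝ (fun D' : Fin m → ℝ => L u0 D') D0) (Pi.single k 1) * M⁻¹ k l)
        * Dψ l dv := by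
    rw [fact2]
    simp only [hA2v, hpartial]
    rw [Finset.mul_sum]
    refine Finset.sum_congr rfl fun k _ => ?_
    rw [Finset.sum_mul, Finset.mul_sum]
    refine Finset.sum_congr rfl fun l _ => ?_
    ring
  rw [hsplit, fact1 (DU (A1 dv, A2 dv))]
  simp only [mul_add, Finset.sum_add_distrib]
  rw [e1, e2]
  simp only [inner_sub_left, real_inner_smul_left, sum_inner, hgradpsi]
  ring
end

section
/- Suppose differentiable curves t ↦ X_β(t) ∈ ℝ^d and t ↦ m̄_β(t) ∈ ℝ^d (β = 1, …, n) satisfy the particle equations Ẋ_β = Σ_l ũ_l(t) ψ_l(X_β) and (d/dt) m̄_β = −Σ_l (ũ_l(t) · m̄_β) ∇ψ_l(X_β) + D̄_β Σ_l f̃_l(t) ∇ψ_l(X_β), for given time-dependent grid fields ũ(t) ∈ (ℝ^d)^m and f̃(t) ∈ ℝ^m. Then for every grid index k the interpolated grid momentum P_k(t) := Σ_β (m̄_β(t)/ΔS) ψ_k(X_β(t)) satisfies the discrete Euler–Poincaré momentum equation on the grid: (d/dt) P_k = −Σ_β (1/ΔS) (Σ_l (ũ_l · m̄_β) ∇ψ_l(X_β))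 ψ_k(X_β) + Σ_β (D̄_β/ΔS) (Σ_l f̃_l ∇ψ_l(X_β)) ψ_k(X_β) + Σ_β (m̄_β/ΔS) ((Σ_l ũ_l ψ_l(X_β)) · ∇ψ_k(X_β)). -/
open scoped RealInnerProductSpace

/-- **Discrete Euler–Poincaré momentum equation on the grid.** Suppose the particle
trajectories and momenta satisfy `Ẋ_β = ∑ l, ψ_l(X_β) ũ_l` and
`(d/dt) m̄_β = -∑ l (ũ_l · m̄_β) ∇ψ_l(X_β) + D̄_β ∑ l f̃_l ∇ψ_l(X_β)` for given
time-dependent grid fields `ũ(t)` and `f̃(t)`.  Then the interpolated grid momentum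
`P_k(t) = ∑ β (m̄_β/ΔS) ψ_k(X_β)` satisfies
`(d/dt) P_k = -∑ β (1/ΔS) (∑ l (ũ_l·m̄_β) ∇ψ_l(X_β)) ψ_k(X_β)
  + ∑ β (D̄_β/ΔS) (∑ l f̃_l ∇ψ_l(X_β)) ψ_k(X_β)
  + ∑ β (m̄_β/ΔS) ((∑ l ψ_l(X_β) ũ_l) · ∇ψ_k(X_β))`. -/
theorem discrete_euler_poincare_momentum_equation
    (d m n : ℕ) (ΔS : ℝ) (hΔS : 0 < ΔS)
    (ψ : Fin m → EuclideanSpace ℝ (Fin d) → ℝ) (hψ : ∀ k, ContDiff ℝ 1 (ψ k))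
    (Dbar : Fin n → ℝ)
    (ut : ℝ → Fin m → EuclideanSpace ℝ (Fin d))
    (ft : ℝ → Fin m → ℝ)
    (X mbar : Fin n → ℝ → EuclideanSpace ℝ (Fin d))
    (hX : ∀ β t, HasDerivAt (X β) (∑ l, ψ l (X β t) • ut t l) t)
    (hm : ∀ β t, HasDerivAt (mbar β)
      (-(∑ l, ⟪ut t l, mbar β t⟫ • gradient (ψ l) (X β t))
        + Dbar β • ∑ l, ft t l • gradient (ψ l) (X β t)) t) :
    ∀ (k : Fin m) (t : ℝ),
      HasDerivAt (fun s => ∑ β, (ΔS)⁻¹ • (ψ k (X β s) • mbar β s))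
        (-∑ β, (ΔS)⁻¹ • (ψ k (X β t) • ∑ l, ⟪ut t l, mbar β t⟫ • gradient (ψ l) (X β t))
          + ∑ β, (Dbar β / ΔS) • (ψ k (X β t) • ∑ l, ft t l • gradient (ψ l) (X β t))
          + ∑ β, (ΔS)⁻¹ •
              (⟪∑ l, ψ l (X β t) • ut t l, gradient (ψ k) (X β t)⟫ • mbar β t)) t := by
  intro k t
  have hcomp : ∀ β : Fin n, HasDerivAt (fun s => ψ k (X β s))
      ⟪gradient (ψ k) (X β t), ∑ l, ψ l (X β t) • ut t l⟫ t := by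
    intro β
    have hg : HasGradientAt (ψ k) (gradient (ψ k) (X β t)) (X β t) :=
      (((hψ k).differentiable one_ne_zero) (X β t)).hasGradientAt
    have := hg.hasFDerivAt.comp_hasDerivAt t (hX β t)
    exact this
  have hterm : ∀ β : Fin n, HasDerivAt (fun s => (ΔS)⁻¹ • (ψ k (X β s) • mbar β s))
      ((ΔS)⁻¹ • (ψ k (X β t) • (-(∑ l, ⟪ut t l, mbar β t⟫ • gradient (ψ l) (X β t))
          + Dbar β • ∑ l, ft t l • gradient (ψ l) (X β t))
        + ⟪gradient (ψ k) (X β t), ∑ l, ψ l (X β t) • ut t l⟫ • mbar β t)) t := by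
    intro β
    have := ((hcomp β).smul (hm β t)).const_smul (ΔS)⁻¹; exact this
  have hsum := HasDerivAt.fun_sum (fun β (_ : β ∈ Finset.univ) => hterm β)
  convert hsum using 1
  case e'_4 => rfl
  case e'_5 => rfl
  case e'_6 => rfl
  rw [← Finset.sum_neg_distrib, ← Finset.sum_add_distrib, ← Finset.sum_add_distrib]
  refine Finset.sum_congr rfl fun β _ => ?_
  rw [real_inner_comm, div_eq_mul_inv]
  module
end

section
/- (Canonical equations for the semidiscrete EP-Diff equations) Let A be a symmetric invertible real m×m matrix and define, for particle positions X_β ∈ ℝ^d and momenta m̄_β ∈ ℝ^d (β = 1, …, n), the interpolated momentum p_k(X, m̄) = Σ_β (m̄_β/ΔS) ψ_k(X_β), the grid velocity ũ = A⁻¹ p, and the Hamiltonian H(X, m̄) = (1/2) Σ_{k,l} (A⁻¹)_{kl} p_k · p_l. Then H is differentiable and for every β: (i) ΔS ∇_{m̄_β} H = Σ_k ũ_k ψ_k(X_β), and (ii) ΔS ∇_{X_β} H = Σ_k (ũ_k · m̄_β) ∇ψ_k(X_β). Hence the canonical Hamilton equations are Ẋ_β = [ũ]_β and (d/dt) m̄_β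 = −[(∇ũ)ᵀ]_β · m̄_β, the EP-Diff equations in the discrete calculus. -/
open scoped RealInnerProductSpace

open InnerProductSpace

private lemma quad_hasFDerivAt {E G : Type*} [NormedAddCommGroup E] [InnerProductSpace ℝ E]
    [NormedAddCommGroup G] [NormedSpace ℝ G] {m : ℕ}
    (B : Matrix (Fin m) (Fin m) ℝ) (hB : ∀ k l, B k l = B l k)
    (P : Fin m → G → E) (L : Fin m → G →L[ℝ] E) (x : G)
    (hP : ∀ k, HasFDerivAt (P k) (L k) x) :
    HasFDerivAt (fun y => 1 / 2 * ∑ k, ∑ l, B k l * ⟪P k y, P l y⟫)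
      (∑ k, ∑ l, B k l • ((innerSL ℝ (P l x)).comp (L k))) x := by
  have h0 : ∀ k l : Fin m, HasFDerivAt (fun y => B k l * ⟪P k y, P l y⟫)
      (B k l • ((fderivInnerCLM ℝ (P k x, P l x)).comp ((L k).prod (L l)))) x :=
    fun k l => ((hP k).inner ℝ (hP l)).const_mul _
  have h1 := HasFDerivAt.const_mul
    (HasFDerivAt.sum fun k (_ : k ∈ Finset.univ) =>
      HasFDerivAt.sum fun l (_ : l ∈ Finset.univ) => h0 k l) (1/2 : ℝ)
  convert h1 using 1
  · rfl
  · rfl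
  · funext y; simp only [Finset.sum_apply]
  ext h
  simp only [ContinuousLinearMap.coe_sum', Finset.sum_apply, ContinuousLinearMap.coe_smul',
    Pi.smul_apply, ContinuousLinearMap.coe_comp', Function.comp_apply, fderivInnerCLM_apply,
    innerSL_apply_apply, ContinuousLinearMap.prod_apply, smul_eq_mul]
  have swap : ∑ k, ∑ l, B k l * ⟪P k x, (L l) h⟫ = ∑ k, ∑ l, B k l * ⟪(L k) h, P l x⟫ := by
    rw [Finset.sum_comm]
    exact Finset.sum_congr rfl fun a _ => Finset.sum_congr rfl fun b _ => by
      rw [hB b a, real_inner_comm]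
  have comm : (∑ k, ∑ l, B k l * ⟪P l x, (L k) h⟫) = ∑ k, ∑ l, B k l * ⟪(L k) h, P l x⟫ :=
    Finset.sum_congr rfl fun k _ => Finset.sum_congr rfl fun l _ => by rw [real_inner_comm]
  simp only [mul_add, Finset.sum_add_distrib]
  rw [comm, swap]; ring


/-- **Canonical equations for the semidiscrete EP-Diff equations.** With interpolated grid
momentum `p_k(X, m̄) = ∑ β (m̄_β/ΔS) ψ_k(X_β)`, grid velocity `ũ = A⁻¹ p` and Hamiltonian
`H(X, m̄) = (1/2) ∑ k l (A⁻¹)_{kl} p_k · p_l`, the canonical gradients are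
(i) `ΔS ∇_{m̄_β} H = ∑ k, ψ_k(X_β) ũ_k = [ũ]_β` and
(ii) `ΔS ∇_{X_β} H = ∑ k, (ũ_k · m̄_β) ∇ψ_k(X_β) = [(∇ũ)ᵀ]_β · m̄_β`,
so the canonical Hamilton equations are `Ẋ_β = [ũ]_β`,
`(d/dt) m̄_β = -[(∇ũ)ᵀ]_β · m̄_β`: the EP-Diff equations in the discrete calculus. -/
theorem epdiff_canonical_equations
    (d m n : ℕ) (ΔS : ℝ) (hΔS : 0 < ΔS)
    (ψ : Fin m → EuclideanSpace ℝ (Fin d) → ℝ) (hψ : ∀ k, ContDiff ℝ 1 (ψ k))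
    (A : Matrix (Fin m) (Fin m) ℝ) (hAsymm : A.IsSymm) (hA : Invertible A)
    (p : (Fin n → EuclideanSpace ℝ (Fin d)) → (Fin n → EuclideanSpace ℝ (Fin d)) →
      Fin m → EuclideanSpace ℝ (Fin d))
    (hp : ∀ X mbar k, p X mbar k = ∑ β, (ψ k (X β) / ΔS) • mbar β)
    (ut : (Fin n → EuclideanSpace ℝ (Fin d)) → (Fin n → EuclideanSpace ℝ (Fin d)) →
      Fin m → EuclideanSpace ℝ (Fin d))
    (hut : ∀ X mbar k, ut X mbar k = ∑ l, A⁻¹ k l • p X mbar l)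
    (H : (Fin n → EuclideanSpace ℝ (Fin d)) → (Fin n → EuclideanSpace ℝ (Fin d)) → ℝ)
    (hH : ∀ X mbar, H X mbar = 1 / 2 * ∑ k, ∑ l, A⁻¹ k l * ⟪p X mbar k, p X mbar l⟫) :
    ∀ (X mbar : Fin n → EuclideanSpace ℝ (Fin d)) (β : Fin n),
      HasGradientAt (fun v => H X (Function.update mbar β v))
        ((ΔS)⁻¹ • ∑ k, ψ k (X β) • ut X mbar k) (mbar β) ∧
      HasGradientAt (fun y => H (Function.update X β y) mbar)
        ((ΔS)⁻¹ • ∑ k, ⟪ut X mbar k, mbar β⟫ • gradient (ψ k) (X β)) (X β) := by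
  intro X mbar β
  have hsy : (A⁻¹).IsSymm := by
    unfold Matrix.IsSymm
    rw [Matrix.transpose_nonsing_inv, hAsymm]
  have hBsymm : ∀ k l, A⁻¹ k l = A⁻¹ l k := fun k l => hsy.apply l k
  constructor
  · -- gradient in m̄_β
    have key : ∀ (v : EuclideanSpace ℝ (Fin d)) (k : Fin m), p X (Function.update mbar β v) k
        = p X mbar k + (ψ k (X β) / ΔS) • (v - mbar β) := by
      intro v k
      rw [hp, hp]
      have : ∀ γ : Fin n, (ψ k (X γ) / ΔS) • Function.update mbar β v γ
          = (ψ k (X γ) / ΔS) • mbar γ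
            + (if γ = β then (ψ k (X β) / ΔS) • (v - mbar β) else 0) := by
        intro γ
        rcases eq_or_ne γ β with rfl | hγ
        · simp [Function.update_self, smul_sub]
        · simp [Function.update_of_ne hγ, hγ]
      simp only [this, Finset.sum_add_distrib, Finset.sum_ite_eq', Finset.mem_univ, if_true]
    have hPk : ∀ k : Fin m, HasFDerivAt (fun v : EuclideanSpace ℝ (Fin d) => p X (Function.update mbar β v) k)
        ((ψ k (X β) / ΔS) • ContinuousLinearMap.id ℝ (EuclideanSpace ℝ (Fin d))) (mbar β) := by
      intro k
      have heq : (fun v : EuclideanSpace ℝ (Fin d) => p X (Function.update mbar β v) k)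
          = fun v => p X mbar k + (ψ k (X β) / ΔS) • (v - mbar β) := funext fun v => key v k
      rw [heq]
      exact (((hasFDerivAt_id (mbar β)).sub_const (mbar β)).const_smul (ψ k (X β) / ΔS)).const_add (p X mbar k)
    have hF := quad_hasFDerivAt A⁻¹ hBsymm
      (fun k v => p X (Function.update mbar β v) k)
      (fun k => (ψ k (X β) / ΔS) • ContinuousLinearMap.id ℝ (EuclideanSpace ℝ (Fin d))) (mbar β) hPk
    have hfun : (fun v : EuclideanSpace ℝ (Fin d) => H X (Function.update mbar β v))
        = fun v => 1 / 2 * ∑ k, ∑ l,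
            A⁻¹ k l * ⟪p X (Function.update mbar β v) k, p X (Function.update mbar β v) l⟫ :=
      funext fun v => hH _ _
    rw [hasGradientAt_iff_hasFDerivAt, hfun]
    convert hF using 1
    · rfl
    ext h
    simp only [toDual_apply_apply, ContinuousLinearMap.coe_sum', Finset.sum_apply,
      ContinuousLinearMap.coe_smul', Pi.smul_apply, ContinuousLinearMap.coe_comp',
      Function.comp_apply, innerSL_apply_apply, ContinuousLinearMap.coe_id', id_eq, smul_eq_mul,
      Function.update_eq_self]
    rw [real_inner_smul_left, sum_inner]
    rw [Finset.mul_sum]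
    refine Finset.sum_congr rfl fun k _ => ?_
    rw [real_inner_smul_left, hut, sum_inner, Finset.mul_sum, Finset.mul_sum]
    refine Finset.sum_congr rfl fun l _ => ?_
    rw [real_inner_smul_left, div_eq_mul_inv, real_inner_smul_right]
    ring
  · -- gradient in X_β
    have key : ∀ (y : EuclideanSpace ℝ (Fin d)) (k : Fin m), p (Function.update X β y) mbar k
        = p X mbar k + (ΔS⁻¹ * (ψ k y - ψ k (X β))) • mbar β := by
      intro y k
      rw [hp, hp]
      have : ∀ γ : Fin n, (ψ k (Function.update X β y γ) / ΔS) • mbar γ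
          = (ψ k (X γ) / ΔS) • mbar γ
            + (if γ = β then (ΔS⁻¹ * (ψ k y - ψ k (X β))) • mbar β else 0) := by
        intro γ
        rcases eq_or_ne γ β with rfl | hγ
        · rw [Function.update_self, if_pos rfl, ← add_smul]
          congr 1
          field_simp
          ring
        · simp [Function.update_of_ne hγ, hγ]
      simp only [this, Finset.sum_add_distrib, Finset.sum_ite_eq', Finset.mem_univ, if_true]
    have hPk : ∀ k : Fin m, HasFDerivAt (fun y : EuclideanSpace ℝ (Fin d) => p (Function.update X β y) mbar k)
        ((ΔS⁻¹ • fderiv ℝ (ψ k) (X β)).smulRight (mbar β)) (X β) := by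
      intro k
      have heq : (fun y : EuclideanSpace ℝ (Fin d) => p (Function.update X β y) mbar k)
          = fun y => p X mbar k + (ΔS⁻¹ * (ψ k y - ψ k (X β))) • mbar β :=
        funext fun y => key y k
      rw [heq]
      have hd : HasFDerivAt (ψ k) (fderiv ℝ (ψ k) (X β)) (X β) :=
        ((hψ k).differentiable one_ne_zero (X β)).hasFDerivAt
      exact (((hd.sub_const _).const_mul ΔS⁻¹).smul_const (mbar β)).const_add _
    have hF := quad_hasFDerivAt A⁻¹ hBsymm
      (fun k y => p (Function.update X β y) mbar k)
      (fun k => (ΔS⁻¹ • fderiv ℝ (ψ k) (X β)).smulRight (mbar β)) (X β) hPk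
    have hfun : (fun y : EuclideanSpace ℝ (Fin d) => H (Function.update X β y) mbar)
        = fun y => 1 / 2 * ∑ k, ∑ l,
            A⁻¹ k l * ⟪p (Function.update X β y) mbar k, p (Function.update X β y) mbar l⟫ :=
      funext fun y => hH _ _
    rw [hasGradientAt_iff_hasFDerivAt, hfun]
    convert hF using 1
    · rfl
    ext h
    simp only [toDual_apply_apply, ContinuousLinearMap.coe_sum', Finset.sum_apply,
      ContinuousLinearMap.coe_smul', Pi.smul_apply, ContinuousLinearMap.coe_comp',
      Function.comp_apply, innerSL_apply_apply, ContinuousLinearMap.smulRight_apply,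
      smul_eq_mul, Function.update_eq_self]
    rw [real_inner_smul_left, sum_inner, Finset.mul_sum]
    refine Finset.sum_congr rfl fun k _ => ?_
    have hgrad : ⟪gradient (ψ k) (X β), h⟫ = fderiv ℝ (ψ k) (X β) h := by
      rw [gradient, toDual_symm_apply]
    rw [real_inner_smul_left, hgrad, hut, sum_inner]
    simp only [real_inner_smul_left, real_inner_smul_right]
    rw [Finset.sum_mul, Finset.mul_sum]
    refine Finset.sum_congr rfl fun l _ => ?_
    ring
end

section
/- (Gradient of the discretised shallow-water potential energy) Let M be a symmetric invertible real m×m matrix and g > 0. For particle positions X_β ∈ ℝ^d and constant layer-depth densities D̄_β (β = 1, …, n), define q_k(X) = Σ_β (D̄_β/ΔS) ψ_k(X_β), the grid layer-depth D̃ = M⁻¹ q, and the potential energy V(X) = (g/2) Σ_{k,l} (M⁻¹)_{kl} q_k q_l. Then V is differentiable and for every β, ∇_{X_β} V = g (D̄_β/ΔS) Σ_k D̃_k ∇ψ_k(X_β) = g (D̄_β/ΔS) [∇D̃]_β; i.e. the force on particle β from the potential energy is minus g times its density times the grid-to-particle gradient of the interpolated layer-depth. -/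
open InnerProductSpace

/-- **Gradient of the discretised shallow-water potential energy.** With interpolated grid
layer-depth data `q_k(X) = ∑ β (D̄_β/ΔS) ψ_k(X_β)`, `D̃ = M⁻¹ q` and potential energy
`V(X) = (g/2) ∑ k l (M⁻¹)_{kl} q_k q_l`, the gradient of `V` with respect to the position
`X_β` of particle `β` is `g (D̄_β/ΔS) ∑ k, D̃_k ∇ψ_k(X_β) = g (D̄_β/ΔS) [∇D̃]_β`. -/
theorem gradient_discrete_shallow_water_potential
    (d m n : ℕ) (ΔS g : ℝ) (hΔS : 0 < ΔS) (hg : 0 < g)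
    (ψ : Fin m → EuclideanSpace ℝ (Fin d) → ℝ) (hψ : ∀ k, ContDiff ℝ 1 (ψ k))
    (M : Matrix (Fin m) (Fin m) ℝ) (hMsymm : M.IsSymm) (hM : Invertible M)
    (Dbar : Fin n → ℝ)
    (q : (Fin n → EuclideanSpace ℝ (Fin d)) → Fin m → ℝ)
    (hq : ∀ X k, q X k = ∑ β, Dbar β / ΔS * ψ k (X β))
    (Dt : (Fin n → EuclideanSpace ℝ (Fin d)) → Fin m → ℝ)
    (hDt : ∀ X, Dt X = (M⁻¹).mulVec (q X))
    (V : (Fin n → EuclideanSpace ℝ (Fin d)) → ℝ)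
    (hV : ∀ X, V X = g / 2 * ∑ k, ∑ l, M⁻¹ k l * q X k * q X l) :
    ∀ (X : Fin n → EuclideanSpace ℝ (Fin d)) (β : Fin n),
      HasGradientAt (fun y => V (Function.update X β y))
        ((g * Dbar β / ΔS) • ∑ k, Dt X k • gradient (ψ k) (X β)) (X β) := by
  intro X β
  have hdiff : ∀ k, DifferentiableAt ℝ (ψ k) (X β) :=
    fun k => ((hψ k).differentiable one_ne_zero).differentiableAt
  set ψ' : Fin m → EuclideanSpace ℝ (Fin d) →L[ℝ] ℝ := fun k => fderiv ℝ (ψ k) (X β) with hψ'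
  -- derivative of F k := fun y => q (Function.update X β y) k
  have hF : ∀ k, HasFDerivAt (fun y => q (Function.update X β y) k)
      ((Dbar β / ΔS) • ψ' k) (X β) := by
    intro k
    have : (fun y : EuclideanSpace ℝ (Fin d) => q (Function.update X β y) k)
        = fun y => ∑ γ, Dbar γ / ΔS * ψ k (Function.update X β y γ) := by
      funext y; exact hq _ k
    rw [this]
    have : ((Dbar β / ΔS) • ψ' k)
        = ∑ γ : Fin n, (if γ = β then (Dbar γ / ΔS) • ψ' k else 0) := by
      simp
    rw [this]
    apply HasFDerivAt.fun_sum
    intro γ _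
    by_cases hγ : γ = β
    · subst hγ
      simp only [if_true]
      have : (fun y : EuclideanSpace ℝ (Fin d) => Dbar γ / ΔS * ψ k (Function.update X γ y γ))
          = fun y => Dbar γ / ΔS * ψ k y := by
        funext y; rw [Function.update_self]
      rw [this]
      exact ((hdiff k).hasFDerivAt).const_mul _
    · simp only [if_neg hγ]
      have : (fun y : EuclideanSpace ℝ (Fin d) => Dbar γ / ΔS * ψ k (Function.update X β y γ))
          = fun _ => Dbar γ / ΔS * ψ k (X γ) := by
        funext y; rw [Function.update_of_ne hγ]
      rw [this]
      exact hasFDerivAt_const _ _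
  have hFval : ∀ k, q (Function.update X β (X β)) k = q X k := by
    intro k; rw [Function.update_eq_self]
  -- derivative of V ∘ update
  have hVf : HasFDerivAt (fun y => V (Function.update X β y))
      ((g/2) • ∑ k, ∑ l, ((M⁻¹ k l * q X k) • ((Dbar β / ΔS) • ψ' l)
        + q X l • (M⁻¹ k l • ((Dbar β / ΔS) • ψ' k)))) (X β) := by
    have : (fun y => V (Function.update X β y))
        = fun y => g/2 * ∑ k, ∑ l,
            M⁻¹ k l * q (Function.update X β y) k * q (Function.update X β y) l := by
      funext y; exact hV _
    rw [this]
    apply HasFDerivAt.const_mul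
    apply HasFDerivAt.fun_sum; intro k _
    apply HasFDerivAt.fun_sum; intro l _
    have h1 : HasFDerivAt (fun y => M⁻¹ k l * q (Function.update X β y) k)
        (M⁻¹ k l • ((Dbar β / ΔS) • ψ' k)) (X β) := (hF k).const_mul _
    have := h1.fun_mul (hF l)
    simpa [hFval] using this
  rw [hasGradientAt_iff_hasFDerivAt]
  refine HasFDerivAt.congr_fderiv hVf (Eq.symm ?_)
  -- equality of continuous linear maps
  ext v
  simp only [toDual_apply_apply, ContinuousLinearMap.smul_apply, ContinuousLinearMap.sum_apply,
    ContinuousLinearMap.add_apply, smul_eq_mul, inner_smul_left, map_sum, inner_sum,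
    inner_smul_real_left, RCLike.conj_to_real]
  have hgrad : ∀ k, ⟪gradient (ψ k) (X β), v⟫_ℝ = ψ' k v := by
    intro k
    rw [gradient, toDual_symm_apply]
  rw [sum_inner]
  simp only [real_inner_smul_left, hgrad]
  have hsymm : ∀ k l, M⁻¹ k l = M⁻¹ l k := by
    intro k l
    have h : Matrix.transpose M⁻¹ = M⁻¹ := by rw [Matrix.transpose_nonsing_inv, hMsymm.eq]
    have := congrFun (congrFun h k) l
    simpa [Matrix.transpose_apply] using this.symm
  have hDtv : ∀ k, Dt X k = ∑ l, M⁻¹ k l * q X l := by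
    intro k; rw [hDt]; rfl
  set u : Fin m → ℝ := fun k => ψ' k v with hu
  set a : ℝ := Dbar β / ΔS with ha
  have h1 : ∑ k, ∑ l, (M⁻¹ k l * q X k * (a * u l) + q X l * (M⁻¹ k l * (a * u k)))
      = 2 * (a * ∑ k, Dt X k * u k) := by
    have hin : ∀ k, ∑ l, (M⁻¹ k l * q X k * (a * u l) + q X l * (M⁻¹ k l * (a * u k)))
        = (∑ l, M⁻¹ k l * q X k * (a * u l)) + Dt X k * (a * u k) := by
      intro k
      rw [Finset.sum_add_distrib]
      congr 1
      rw [hDtv, Finset.sum_mul]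
      exact Finset.sum_congr rfl fun l _ => by ring
    simp only [hin]
    rw [Finset.sum_add_distrib, Finset.sum_comm]
    have h2 : ∀ l, ∑ k, M⁻¹ k l * q X k * (a * u l) = Dt X l * (a * u l) := by
      intro l
      rw [hDtv, Finset.sum_mul]
      exact Finset.sum_congr rfl fun k _ => by rw [hsymm l k]
    simp only [h2]
    have h3 : ∀ (S : Fin m → ℝ), ∑ k, S k * (a * u k) = a * ∑ k, S k * u k := by
      intro S; rw [Finset.mul_sum]; exact Finset.sum_congr rfl fun k _ => by ring
    rw [h3]; ring
  rw [h1, ha]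
  ring
end
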